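/- Consider the control affine system ẋ = f(x) + g(x)u on an open set D ⊆ ℝⁿ, with f : D → ℝⁿ and g : D → ℝ^{n×m} continuous, input constraint map U : D → Set(ℝ^m), and let h : D → ℝ be continuously differentiable with S = {x ∈ D : h(x) ≥ 0} nonempty. Suppose there exist a minimal function μ : ℝ → ℝ and a continuous feedback k : D → ℝ^m with k(x) ∈ U(x) and L_f h(x) + L_g h(x)·k(x) ≥ −μ(h(x)) for all x ∈ D. Then S is positively invariant for the closed-loop system ẋ = f(x) + g(x)k(x): every differentiable x : [0,τ) → D with ẋ(t) = f(x(t)) + g(x(t))k(x(t)) for all t and x(0) ∈ S satisfies x(t) ∈ S for all t ∈ [0,τ). -/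

import Mathlib

/-- A continuous function `μ : ℝ → ℝ` is a minimal function if for every `τ > 0`, every
differentiable `w : [0,τ) → ℝ` with `w(0) = 0` and `ẇ(t) = −μ(w(t))` satisfies `w(t) ≥ 0`. -/
def IsMinimalFunction (μ : ℝ → ℝ) : Prop :=
  Continuous μ ∧
    ∀ τ : ℝ, 0 < τ → ∀ w : ℝ → ℝ, w 0 = 0 →
      (∀ t ∈ Set.Ico (0 : ℝ) τ, HasDerivAt w (-μ (w t)) t) →
      ∀ t ∈ Set.Ico (0 : ℝ) τ, 0 ≤ w t

/-!
Along a closed-loop trajectory, `y = h ∘ x` satisfies `ẏ ≥ -μ(y)` and `y(0) ≥ 0`. If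
`y(t₁) = -b < 0`, separating variables in this differential inequality (after regularising `μ` to
`max μ 0 + ε` and letting `ε → 0`) gives `∫_{-b}^0 dv / μ(v) ≤ t₁ < ∞`. But when this integral is
finite, inverting `T(v) = ∫_v^0 ds / μ(s)` produces a solution of `ẇ = -μ(w)`, `w(0) = 0` that is
negative for `t > 0`, which a minimal function does not allow.
-/

open Set Filter Topology MeasureTheory intervalIntegral

theorem ae_pos_of_lintegral_inv_ofReal_ne_top {α : Type*} [MeasurableSpace α] {ν : Measure α}
    {f : α → ℝ} (hf : AEMeasurable f ν) (h : ∫⁻ x, (ENNReal.ofReal (f x))⁻¹ ∂ν ≠ ⊤) :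
    ∀ᵐ x ∂ν, 0 < f x := by
  filter_upwards [ae_lt_top' (ENNReal.measurable_ofReal.comp_aemeasurable hf).inv h] with x hx
  simpa using hx

theorem integrable_inv_of_lintegral_inv_ofReal_ne_top {α : Type*} [MeasurableSpace α]
    {ν : Measure α} {f : α → ℝ} (hf : AEMeasurable f ν)
    (h : ∫⁻ x, (ENNReal.ofReal (f x))⁻¹ ∂ν ≠ ⊤) : Integrable (fun x => (f x)⁻¹) ν := by
  refine (integrable_toReal_of_lintegral_ne_top
    (ENNReal.measurable_ofReal.comp_aemeasurable hf).inv h).congr ?_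
  filter_upwards [ae_pos_of_lintegral_inv_ofReal_ne_top hf h] with x hx
  simp [ENNReal.toReal_inv, hx.le]

theorem exists_integral_inv_eq_div {μ : ℝ → ℝ} {p q : ℝ} (hμ : ContinuousOn μ (uIcc p q))
    (hpq : p ≠ q) (hpos : ∀ᵐ v ∂volume.restrict (uIoc p q), 0 < μ v)
    (hint : IntervalIntegrable (fun v => (μ v)⁻¹) volume p q) :
    ∃ ξ ∈ uIcc p q, 0 < μ ξ ∧ ∫ v in p..q, (μ v)⁻¹ = (q - p) / μ ξ := by
  wlog h : p < q generalizing p q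
  · obtain ⟨ξ, hξ, hξpos, heq⟩ := this (uIcc_comm p q ▸ hμ) hpq.symm (uIoc_comm p q ▸ hpos)
      hint.symm (lt_of_le_of_ne (not_lt.1 h) hpq.symm)
    refine ⟨ξ, uIcc_comm p q ▸ hξ, hξpos, ?_⟩
    rw [integral_symm, heq, ← neg_div, neg_sub]
  rw [uIcc_of_lt h] at hμ
  rw [uIoc_of_le h.le] at hpos
  have hint' : IntegrableOn (fun v => (μ v)⁻¹) (Ioc p q) :=
    (intervalIntegrable_iff_integrableOn_Ioc_of_le h.le).1 hint
  obtain ⟨s₁, hs₁, hmin⟩ := isCompact_Icc.exists_isMinOn (nonempty_Icc.2 h.le) hμ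
  obtain ⟨s₂, hs₂, hmax⟩ := isCompact_Icc.exists_isMaxOn (nonempty_Icc.2 h.le) hμ
  have hmax_pos : 0 < μ s₂ := by
    have : (ae (volume.restrict (Ioc p q))).NeBot := ae_restrict_neBot.2 (by simp [h])
    obtain ⟨v, hv, hvI⟩ := (hpos.and (ae_restrict_mem measurableSet_Ioc)).exists
    exact hv.trans_le (hmax (Ioc_subset_Icc_self hvI))
  rw [integral_of_le h.le]
  set I := ∫ v in Ioc p q, (μ v)⁻¹
  have hI_ge : (q - p) / μ s₂ ≤ I := by
    calc (q - p) / μ s₂ = ∫ _ in Ioc p q, (μ s₂)⁻¹ := by simp [div_eq_mul_inv, h.le]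
      _ ≤ ∫ v in Ioc p q, (μ v)⁻¹ := by
        refine setIntegral_mono_ae_restrict (integrableOn_const (by simp)) hint' ?_
        filter_upwards [hpos, ae_restrict_mem measurableSet_Ioc] with v hv hvI
        exact inv_anti₀ hv (hmax (Ioc_subset_Icc_self hvI))
  have hI_pos : 0 < I := (div_pos (sub_pos.2 h) hmax_pos).trans_le hI_ge
  have hmean_le : (q - p) / I ≤ μ s₂ := by
    rw [div_le_iff₀ hI_pos]
    rwa [div_le_iff₀ hmax_pos, mul_comm] at hI_ge
  have hmean_ge : μ s₁ ≤ (q - p) / I := by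
    rcases le_or_gt (μ s₁) 0 with h0 | h0
    · exact h0.trans (div_pos (sub_pos.2 h) hI_pos).le
    · have hI_le : I ≤ (q - p) / μ s₁ := by
        calc ∫ v in Ioc p q, (μ v)⁻¹ ≤ ∫ _ in Ioc p q, (μ s₁)⁻¹ :=
              setIntegral_mono_on hint' (integrableOn_const (by simp)) measurableSet_Ioc
                fun v hv => inv_anti₀ h0 (hmin (Ioc_subset_Icc_self hv))
          _ = (q - p) / μ s₁ := by simp [div_eq_mul_inv, h.le]
      rw [le_div_iff₀ hI_pos]
      rwa [le_div_iff₀ h0, mul_comm] at hI_le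
  have hsub : uIcc s₁ s₂ ⊆ Icc p q := uIcc_subset_Icc hs₁ hs₂
  obtain ⟨ξ, hξ, hξeq⟩ := intermediate_value_uIcc (hμ.mono hsub) (mem_uIcc_of_le hmean_ge hmean_le)
  refine ⟨ξ, uIcc_of_lt h ▸ hsub hξ, hξeq ▸ div_pos (sub_pos.2 h) hI_pos, ?_⟩
  rw [hξeq, div_div_cancel₀ (sub_pos.2 h).ne']

theorem exists_integral_inv_sub_eq_div {μ : ℝ → ℝ} {a c v v' : ℝ} (hμ : ContinuousOn μ (Icc a c))
    (hpos : ∀ᵐ s ∂volume.restrict (Ioc a c), 0 < μ s)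
    (hint : IntegrableOn (fun s => (μ s)⁻¹) (Ioc a c)) (hv : v ∈ Icc a c) (hv' : v' ∈ Icc a c)
    (hne : v ≠ v') :
    ∃ ξ ∈ uIcc v v', 0 < μ ξ ∧
      (∫ s in v..c, (μ s)⁻¹) - (∫ s in v'..c, (μ s)⁻¹) = (v' - v) / μ ξ := by
  have hsub : ∀ u ∈ Icc a c, ∀ u' ∈ Icc a c, uIoc u u' ⊆ Ioc a c :=
    fun u hu u' hu' => Ioc_subset_Ioc (le_min hu.1 hu'.1) (max_le hu.2 hu'.2)
  have hii : ∀ u ∈ Icc a c, ∀ u' ∈ Icc a c, IntervalIntegrable (fun s => (μ s)⁻¹) volume u u' :=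
    fun u hu u' hu' => intervalIntegrable_iff.2 (hint.mono_set (hsub u hu u' hu'))
  have hc : c ∈ Icc a c := right_mem_Icc.2 (hv.1.trans hv.2)
  have hsplit : (∫ s in v..c, (μ s)⁻¹) - (∫ s in v'..c, (μ s)⁻¹) = ∫ s in v..v', (μ s)⁻¹ := by
    rw [sub_eq_iff_eq_add', ← integral_add_adjacent_intervals (hii v hv v' hv') (hii v' hv' c hc),
      add_comm]
  rw [hsplit]
  exact exists_integral_inv_eq_div (hμ.mono (ordConnected_Icc.uIcc_subset hv hv')) hne
    (ae_restrict_of_ae_restrict_of_subset (hsub v hv v' hv') hpos) (hii v hv v' hv')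

theorem hasDerivWithinAt_of_slope_eq {W g : ℝ → ℝ} {S : Set ℝ} {t₀ M : ℝ}
    (hg : ContinuousAt g (W t₀))
    (hslope : ∀ t ∈ S \ {t₀}, ∃ ξ ∈ uIcc (W t) (W t₀), |g ξ| ≤ M ∧ slope W t₀ t = g ξ) :
    HasDerivWithinAt W (g (W t₀)) S t₀ := by
  rw [hasDerivWithinAt_iff_tendsto_slope, Metric.tendsto_nhdsWithin_nhds]
  intro ε hε
  obtain ⟨δ, hδ, hδg⟩ := Metric.continuousAt_iff.1 hg ε hε
  refine ⟨δ / (|M| + 1), by positivity, fun t ht hdist => ?_⟩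
  obtain ⟨ξ, hξ, hgξ, hslope_eq⟩ := hslope t ht
  rw [hslope_eq]
  apply hδg
  rw [Real.dist_eq] at hdist ⊢
  have hW : W t - W t₀ = (t - t₀) * g ξ := by
    rw [← hslope_eq, ← smul_eq_mul, sub_smul_slope, vsub_eq_sub]
  calc |ξ - W t₀| ≤ |W t - W t₀| := abs_sub_left_of_mem_uIcc (uIcc_comm (W t) _ ▸ hξ)
    _ = |t - t₀| * |g ξ| := by rw [hW, abs_mul]
    _ ≤ |t - t₀| * (|M| + 1) := by
        gcongr; linarith [le_abs_self M]
    _ < δ := (lt_div_iff₀ (by positivity)).1 hdist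

-- `T` need not be differentiable where `μ` vanishes, so the derivative of its inverse is read off
-- the mean-value form of the difference quotients of `T` instead of the inverse function theorem.
theorem hasDerivWithinAt_of_rightInvOn_of_sub_eq_div {T W μ : ℝ → ℝ} {S K : Set ℝ} {t₀ M : ℝ}
    (hK : K.OrdConnected) (hμ : ContinuousAt μ (W t₀)) (hM : ∀ v ∈ K, |μ v| ≤ M)
    (hWK : MapsTo W S K) (hTW : RightInvOn W T S)
    (hT : ∀ v ∈ K, ∀ v' ∈ K, v ≠ v' → ∃ ξ ∈ uIcc v v', 0 < μ ξ ∧ T v - T v' = (v' - v) / μ ξ)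
    (ht₀ : t₀ ∈ S) : HasDerivWithinAt W (-μ (W t₀)) S t₀ := by
  refine hasDerivWithinAt_of_slope_eq (g := fun v => -μ v) (M := M) hμ.neg ?_
  rintro t ⟨ht, hne⟩
  have hWne : W t ≠ W t₀ := fun h => hne (by rw [← hTW ht, h, hTW ht₀]; rfl)
  obtain ⟨ξ, hξ, hξpos, hTξ⟩ := hT (W t) (hWK ht) (W t₀) (hWK ht₀) hWne
  refine ⟨ξ, hξ, by simpa using hM ξ (hK.uIcc_subset (hWK ht) (hWK ht₀) hξ), ?_⟩
  rw [hTW ht, hTW ht₀] at hTξ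
  have hWne' : W t₀ - W t ≠ 0 := sub_ne_zero.2 hWne.symm
  rw [slope_def_field, hTξ]
  field_simp
  ring

theorem exists_hasDerivAt_extend_of_hasDerivWithinAt_Icc {W W' : ℝ → ℝ} {τ : ℝ} (hτ : 0 < τ)
    (hW : ∀ t ∈ Ico 0 τ, HasDerivWithinAt W (W' t) (Icc 0 τ) t) :
    ∃ w : ℝ → ℝ, EqOn w W (Ici 0) ∧ ∀ t ∈ Ico 0 τ, HasDerivAt w (W' t) t := by
  set w : ℝ → ℝ := fun t => if t < 0 then W 0 + t * W' 0 else W t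
  have hwW : EqOn w W (Ici 0) := fun t ht => if_neg (not_lt.2 ht)
  refine ⟨w, hwW, fun t ht => ?_⟩
  rcases ht.1.eq_or_lt with rfl | hpos
  · have hleft : HasDerivWithinAt w (W' 0) (Iic 0) 0 := by
      refine ((hasDerivAt_mul_const (W' 0)).const_add (W 0)).hasDerivWithinAt.congr_of_mem
        (fun s hs => ?_) self_mem_Iic
      rcases (mem_Iic.1 hs).lt_or_eq with h | rfl <;> simp [w, *]
    have hright : HasDerivWithinAt w (W' 0) (Ici 0) 0 :=
      ((hW 0 ht).mono_of_mem_nhdsWithin (Icc_mem_nhdsGE hτ)).congr_of_mem hwW self_mem_Ici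
    simpa using hleft.union hright
  · exact ((hW t ht).hasDerivAt (Icc_mem_nhds hpos ht.2)).congr_of_eventuallyEq
      (eventually_of_mem (Ioi_mem_nhds hpos) fun s hs => hwW (mem_Ici.2 (le_of_lt hs)))

theorem exists_neg_solution_of_integrableOn_inv {μ : ℝ → ℝ} {b : ℝ} (hμ : Continuous μ)
    (hb : 0 < b) (hpos : ∀ᵐ v ∂volume.restrict (Ioc (-b) 0), 0 < μ v)
    (hint : IntegrableOn (fun v => (μ v)⁻¹) (Ioc (-b) 0)) :
    ∃ τ > 0, ∃ W : ℝ → ℝ, W 0 = 0 ∧ (∀ t ∈ Ioc 0 τ, W t < 0) ∧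
      ∀ t ∈ Icc 0 τ, HasDerivWithinAt W (-μ (W t)) (Icc 0 τ) t := by
  set T : ℝ → ℝ := fun v => ∫ s in v..0, (μ s)⁻¹
  have hT0 : T 0 = 0 := integral_same
  have hb0 : -b ≤ 0 := by linarith
  have hT : ∀ v ∈ Icc (-b) 0, ∀ v' ∈ Icc (-b) 0, v ≠ v' →
      ∃ ξ ∈ uIcc v v', 0 < μ ξ ∧ T v - T v' = (v' - v) / μ ξ :=
    fun v hv v' hv' => exists_integral_inv_sub_eq_div hμ.continuousOn hpos hint hv hv'
  have hTinj : InjOn T (Icc (-b) 0) := by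
    intro v hv v' hv' heq
    by_contra hne
    obtain ⟨ξ, -, hξ, hTξ⟩ := hT v hv v' hv' hne
    rw [heq, sub_self, eq_comm, div_eq_zero_iff, sub_eq_zero] at hTξ
    exact hTξ.elim (fun h => hne h.symm) hξ.ne'
  have hτ : 0 < T (-b) := by
    obtain ⟨ξ, -, hξ, hTξ⟩ := hT (-b) (left_mem_Icc.2 hb0) 0 (right_mem_Icc.2 hb0) (by linarith)
    rw [hT0, sub_zero] at hTξ
    rw [hTξ]
    exact div_pos (by linarith) hξ
  have hTcont : ContinuousOn T (Icc (-b) 0) := by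
    have hint' : IntegrableOn (fun v => (μ v)⁻¹) (uIcc (-b) 0) := by
      rw [uIcc_of_le hb0]
      exact (integrableOn_Icc_iff_integrableOn_Ioc (by simp)).2 hint
    simpa only [uIcc_of_le hb0] using continuousOn_primitive_interval_left hint'
  have hsurj : SurjOn T (Icc (-b) 0) (Icc 0 (T (-b))) := by
    have := intermediate_value_Icc' hb0 hTcont
    rwa [hT0] at this
  obtain ⟨M, hM⟩ := isCompact_Icc.exists_bound_of_continuousOn (hμ.continuousOn (s := Icc (-b) 0))
  set W := Function.invFunOn T (Icc (-b) 0)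
  have hWK : MapsTo W (Icc 0 (T (-b))) (Icc (-b) 0) := hsurj.mapsTo_invFunOn
  have hTW : RightInvOn W T (Icc 0 (T (-b))) := hsurj.rightInvOn_invFunOn
  refine ⟨T (-b), hτ, W, ?_, fun t ht => ?_, fun t₀ ht₀ => ?_⟩
  · have h0 : (0 : ℝ) ∈ Icc 0 (T (-b)) := left_mem_Icc.2 hτ.le
    exact hTinj (hWK h0) (right_mem_Icc.2 hb0) ((hTW h0).trans hT0.symm)
  · refine (hWK (Ioc_subset_Icc_self ht)).2.lt_of_ne fun h => ht.1.ne' ?_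
    rw [← hTW (Ioc_subset_Icc_self ht), h, hT0]
  · exact hasDerivWithinAt_of_rightInvOn_of_sub_eq_div ordConnected_Icc hμ.continuousAt
      (fun v hv => by simpa using hM v hv) hWK hTW hT ht₀

theorem integral_inv_add_le_of_supersolution {m y : ℝ → ℝ} {a c ε : ℝ} (hm : Continuous m)
    (hm0 : ∀ v, 0 ≤ m v) (hε : 0 < ε) (hac : a ≤ c)
    (hy : ∀ t ∈ Icc a c, DifferentiableAt ℝ y t ∧ -m (y t) ≤ deriv y t) :
    ∫ v in y c..y a, (m v + ε)⁻¹ ≤ c - a := by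
  have hden : ∀ v, 0 < m v + ε := fun v => by linarith [hm0 v]
  have hG : Continuous fun v => (m v + ε)⁻¹ := (hm.add continuous_const).inv₀ fun v => (hden v).ne'
  set φ : ℝ → ℝ := fun t => (∫ v in y a..y t, (m v + ε)⁻¹) + t
  have hφ : ∀ t ∈ Icc a c, HasDerivAt φ ((m (y t) + ε)⁻¹ * deriv y t + 1) t := fun t ht =>
    (((hG.integral_hasStrictDerivAt _ _).hasDerivAt).comp t (hy t ht).1.hasDerivAt).add
      (hasDerivAt_id t)
  have hφ' : ∀ t ∈ Icc a c, 0 ≤ (m (y t) + ε)⁻¹ * deriv y t + 1 := fun t ht => by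
    have hpos := hden (y t)
    have hsum : 0 ≤ deriv y t + (m (y t) + ε) := by linarith [(hy t ht).2, hm0 (y t)]
    calc (0 : ℝ) ≤ (deriv y t + (m (y t) + ε)) / (m (y t) + ε) := div_nonneg hsum hpos.le
      _ = (m (y t) + ε)⁻¹ * deriv y t + 1 := by field_simp
  have hmono : MonotoneOn φ (Icc a c) :=
    monotoneOn_of_hasDerivWithinAt_nonneg (convex_Icc a c)
      (fun t ht => (hφ t ht).continuousAt.continuousWithinAt)
      (fun t ht => (hφ t (interior_subset ht)).hasDerivWithinAt)
      (fun t ht => hφ' t (interior_subset ht))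
  have := hmono (left_mem_Icc.2 hac) (right_mem_Icc.2 hac) hac
  simp only [φ, integral_same, zero_add] at this
  rw [integral_symm]
  linarith

theorem lintegral_inv_le_of_supersolution {μ y : ℝ → ℝ} {a c : ℝ} (hμ : Continuous μ)
    (hac : a ≤ c) (hy : ∀ t ∈ Icc a c, DifferentiableAt ℝ y t ∧ -μ (y t) ≤ deriv y t) :
    ∫⁻ v in Ioc (y c) (y a), (ENNReal.ofReal (μ v))⁻¹ ≤ ENNReal.ofReal (c - a) := by
  set m : ℝ → ℝ := fun v => max (μ v) 0
  have hm : Continuous m := hμ.max continuous_const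
  have hm0 : ∀ v, 0 ≤ m v := fun v => le_max_right _ _
  have hym : ∀ t ∈ Icc a c, DifferentiableAt ℝ y t ∧ -m (y t) ≤ deriv y t := fun t ht =>
    ⟨(hy t ht).1, (neg_le_neg (le_max_left _ _)).trans (hy t ht).2⟩
  set ε : ℕ → ℝ := fun k => 1 / (k + 1)
  have hε : ∀ k, 0 < ε k := fun k => by positivity
  have hden : ∀ k v, 0 < m v + ε k := fun k v => by linarith [hm0 v, hε k]
  have hbound : ∀ k, ∫⁻ v in Ioc (y c) (y a), ENNReal.ofReal (m v + ε k)⁻¹ ≤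
      ENNReal.ofReal (c - a) := by
    intro k
    rcases le_or_gt (y c) (y a) with h | h
    · have hint : IntegrableOn (fun v => (m v + ε k)⁻¹) (Ioc (y c) (y a)) :=
        ((hm.add continuous_const).inv₀ fun v => (hden k v).ne').integrableOn_Ioc
      rw [← ofReal_integral_eq_lintegral_ofReal hint
        (Eventually.of_forall fun v => (inv_pos.2 (hden k v)).le), ← integral_of_le h]
      exact ENNReal.ofReal_le_ofReal (integral_inv_add_le_of_supersolution hm hm0 (hε k) hac hym)
    · simp [Ioc_eq_empty_of_le h.le]
  have hlim : Tendsto (fun k => ∫⁻ v in Ioc (y c) (y a), ENNReal.ofReal (m v + ε k)⁻¹) atTop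
      (𝓝 (∫⁻ v in Ioc (y c) (y a), (ENNReal.ofReal (μ v))⁻¹)) := by
    refine lintegral_tendsto_of_tendsto_of_monotone (fun k => ?_) (ae_of_all _ fun v => ?_)
      (ae_of_all _ fun v => ?_)
    · exact (ENNReal.continuous_ofReal.comp ((hm.add continuous_const).inv₀
        fun v => (hden k v).ne')).measurable.aemeasurable
    · intro j k hjk
      refine ENNReal.ofReal_le_ofReal (inv_anti₀ (hden k v) (add_le_add_right ?_ _))
      exact one_div_le_one_div_of_le (by positivity) (by exact_mod_cast Nat.add_le_add_right hjk 1)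
    · simp_rw [ENNReal.ofReal_inv_of_pos (hden _ v)]
      have hmμ : ENNReal.ofReal (m v) = ENNReal.ofReal (μ v) := by
        rcases le_total (μ v) 0 with h | h <;> simp [m, h, ENNReal.ofReal_of_nonpos]
      rw [← hmμ]
      refine tendsto_inv_iff.2 (ENNReal.tendsto_ofReal ?_)
      simpa [ε] using (tendsto_const_nhds (x := m v)).add tendsto_one_div_add_atTop_nhds_zero_nat
  exact le_of_tendsto' hlim hbound

theorem IsMinimalFunction.lintegral_inv_eq_top {μ : ℝ → ℝ} (hμ : IsMinimalFunction μ) {b : ℝ}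
    (hb : 0 < b) : ∫⁻ v in Ioc (-b) 0, (ENNReal.ofReal (μ v))⁻¹ = ⊤ := by
  by_contra hfin
  have hmeas : AEMeasurable μ (volume.restrict (Ioc (-b) 0)) := hμ.1.measurable.aemeasurable
  obtain ⟨τ, hτ, W, hW0, hWneg, hW⟩ := exists_neg_solution_of_integrableOn_inv hμ.1 hb
    (ae_pos_of_lintegral_inv_ofReal_ne_top hmeas hfin)
    (integrable_inv_of_lintegral_inv_ofReal_ne_top hmeas hfin)
  obtain ⟨w, hwW, hw⟩ := exists_hasDerivAt_extend_of_hasDerivWithinAt_Icc hτ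
    fun t ht => hW t (Ico_subset_Icc_self ht)
  have hsol : ∀ t ∈ Ico 0 τ, HasDerivAt w (-μ (w t)) t := fun t ht => by
    rw [hwW ht.1]
    exact hw t ht
  have hmid : τ / 2 ∈ Ioc 0 τ := ⟨by linarith, by linarith⟩
  have := hμ.2 τ hτ w (by rw [hwW self_mem_Ici, hW0]) hsol (τ / 2) ⟨hmid.1.le, by linarith⟩
  rw [hwW hmid.1.le] at this
  exact (hWneg _ hmid).not_ge this

theorem IsMinimalFunction.nonneg_of_supersolution {μ y : ℝ → ℝ} (hμ : IsMinimalFunction μ)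
    {τ : ℝ} (hy : ∀ t ∈ Ico 0 τ, DifferentiableAt ℝ y t ∧ -μ (y t) ≤ deriv y t) (hy0 : 0 ≤ y 0) :
    ∀ t ∈ Ico 0 τ, 0 ≤ y t := by
  intro t ht
  by_contra! hyt
  have hle := lintegral_inv_le_of_supersolution hμ.1 ht.1
    fun s hs => hy s ⟨hs.1, hs.2.trans_lt ht.2⟩
  have htop := hμ.lintegral_inv_eq_top (b := -y t) (by linarith)
  rw [neg_neg] at htop
  have hsub : Ioc (y t) 0 ⊆ Ioc (y t) (y 0) := Ioc_subset_Ioc_right hy0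
  exact ENNReal.ofReal_ne_top (top_le_iff.1 (htop ▸ (lintegral_mono_set hsub).trans hle))

theorem minimal_control_barrier_function_invariance_general
    {n m : ℕ} (D : Set (EuclideanSpace ℝ (Fin n))) (hD : IsOpen D)
    (f : EuclideanSpace ℝ (Fin n) → EuclideanSpace ℝ (Fin n))
    (g : EuclideanSpace ℝ (Fin n) →
      (EuclideanSpace ℝ (Fin m) →L[ℝ] EuclideanSpace ℝ (Fin n)))
    (h : EuclideanSpace ℝ (Fin n) → ℝ) (hh : ContDiffOn ℝ 1 h D)
    (μ : ℝ → ℝ) (hμ : IsMinimalFunction μ)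
    (k : EuclideanSpace ℝ (Fin n) → EuclideanSpace ℝ (Fin m))
    (hbar : ∀ x ∈ D, -μ (h x) ≤ fderiv ℝ h x (f x) + fderiv ℝ h x (g x (k x)))
    (τ : ℝ) (x : ℝ → EuclideanSpace ℝ (Fin n))
    (hxD : ∀ t ∈ Set.Ico (0 : ℝ) τ, x t ∈ D)
    (hxsol : ∀ t ∈ Set.Ico (0 : ℝ) τ, HasDerivAt x (f (x t) + g (x t) (k (x t))) t)
    (hx0 : 0 ≤ h (x 0)) :
    ∀ t ∈ Set.Ico (0 : ℝ) τ, 0 ≤ h (x t) := by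
  refine hμ.nonneg_of_supersolution (fun t ht => ?_) hx0
  have hhx : DifferentiableAt ℝ h (x t) :=
    (hh.contDiffAt (hD.mem_nhds (hxD t ht))).differentiableAt one_ne_zero
  have hy : HasDerivAt (fun s => h (x s)) (fderiv ℝ h (x t) (f (x t) + g (x t) (k (x t)))) t :=
    hhx.hasFDerivAt.comp_hasDerivAt t (hxsol t ht)
  refine ⟨hy.differentiableAt, ?_⟩
  rw [hy.deriv, map_add]
  exact hbar _ (hxD t ht)

/-- Theorem 4: for the control affine system `ẋ = f(x) + g(x)u` with a
continuous feedback `k` satisfying the input constraints `k(x) ∈ U(x)` and the minimal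
control barrier function condition `L_f h(x) + L_g h(x)·k(x) ≥ −μ(h(x))` on `D` for a
minimal function `μ`, the set `S = {x ∈ D : h(x) ≥ 0}` is positively invariant for the
closed-loop system `ẋ = f(x) + g(x)k(x)`. -/
theorem minimal_control_barrier_function_invariance
    {n m : ℕ} (D : Set (EuclideanSpace ℝ (Fin n))) (hD : IsOpen D)
    (f : EuclideanSpace ℝ (Fin n) → EuclideanSpace ℝ (Fin n)) (hf : ContinuousOn f D)
    (g : EuclideanSpace ℝ (Fin n) →
      (EuclideanSpace ℝ (Fin m) →L[ℝ] EuclideanSpace ℝ (Fin n))) (hg : ContinuousOn g D)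
    (U : EuclideanSpace ℝ (Fin n) → Set (EuclideanSpace ℝ (Fin m)))
    (h : EuclideanSpace ℝ (Fin n) → ℝ) (hh : ContDiffOn ℝ 1 h D)
    (hSne : ∃ x ∈ D, 0 ≤ h x)
    (μ : ℝ → ℝ) (hμ : IsMinimalFunction μ)
    (k : EuclideanSpace ℝ (Fin n) → EuclideanSpace ℝ (Fin m)) (hk : ContinuousOn k D)
    (hkU : ∀ x ∈ D, k x ∈ U x)
    (hbar : ∀ x ∈ D, -μ (h x) ≤ fderiv ℝ h x (f x) + fderiv ℝ h x (g x (k x)))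
    (τ : ℝ) (x : ℝ → EuclideanSpace ℝ (Fin n))
    (hxD : ∀ t ∈ Set.Ico (0 : ℝ) τ, x t ∈ D)
    (hxsol : ∀ t ∈ Set.Ico (0 : ℝ) τ, HasDerivAt x (f (x t) + g (x t) (k (x t))) t)
    (hx0 : 0 ≤ h (x 0)) :
    ∀ t ∈ Set.Ico (0 : ℝ) τ, 0 ≤ h (x t) :=
  minimal_control_barrier_function_invariance_general D hD f g h hh μ hμ k hbar τ x hxD hxsol hx0
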